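/- arXiv:2406.01763 — 6 statements merged into one kernel-verified Lean document; each statement's English description precedes it below -/
import Mathlib

section
/- For a square matrix R ∈ ℝ^{3×3} and constant a > 0, the function P₁(R) = √(‖RᵀR − I‖_F² + a) is twice continuously differentiable, and every entry of its Hessian (as a function of the 9 entries of R) is uniformly bounded by a constant depending only on a. In particular, each entry |[A(R)]_{ab}|/P₁(R) ≤ 1 and |R_{ab}R_{cd}|/P₁(R) ≤ (3 + 3/√a)/2, where A(R) = RᵀR − I. -/
/-!
Write `P₁ = √g` with `g R = ‖A(R)‖_F² + a` and `A(R) = RᵀR − I`; the Hessian of a square root is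
`D²g / (2√g) − Dg ⊗ Dg / (4√g³)`. The squared column norms of `R` are `A_pp + 1`, so
`‖R‖² ≤ P₁ + 1` (entrywise sup norm), and `|A_pq| ≤ P₁`. The derivatives of `g` are built from `A`
and from the derivative `S ↦ RᵀS + SᵀR` of the Gram matrix, hence `|Dg| = O(P₁ ‖R‖)` and
`|D²g| = O(P₁ + ‖R‖²)`. Both Hessian terms are then `O((P₁ + 1) / P₁)`, bounded since `P₁ ≥ √a`.
-/

open Matrix

attribute [local instance] Matrix.normedAddCommGroup Matrix.normedSpace

/-- Squared Frobenius norm of a 3×3 real matrix. -/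
noncomputable def frobSq (A : Matrix (Fin 3) (Fin 3) ℝ) : ℝ := ∑ i, ∑ j, (A i j) ^ 2

/-- The penalty `P₁(R) = √(‖RᵀR − I‖_F² + a)`. -/
noncomputable def P1 (a : ℝ) (R : Matrix (Fin 3) (Fin 3) ℝ) : ℝ :=
  Real.sqrt (frobSq (Rᵀ * R - 1) + a)

section SqrtHessian

variable {E F : Type*} [NormedAddCommGroup E] [NormedSpace ℝ E]
  [NormedAddCommGroup F] [NormedSpace ℝ F]

theorem iteratedFDeriv_two_apply_of_hasFDerivAt {f : E → F} {x : E} (u v : E) {D : E →L[ℝ] F}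
    (hf : DifferentiableAt ℝ (fderiv ℝ f) x) (hD : HasFDerivAt (fun y => fderiv ℝ f y v) D x) :
    iteratedFDeriv ℝ 2 f x ![u, v] = D u := by
  rw [iteratedFDeriv_two_apply, ← hD.fderiv, fderiv_clm_apply hf (differentiableAt_const v)]
  simp

theorem iteratedFDeriv_two_sqrt_apply {g : E → ℝ} {g' : E → E →L[ℝ] ℝ} {g'' : E →L[ℝ] ℝ}
    {x v : E} (hg : ContDiff ℝ 2 g) (hpos : ∀ y, 0 < g y) (hg' : ∀ y, HasFDerivAt g (g' y) y)
    (hg'' : HasFDerivAt (fun y => g' y v) g'' x) (u : E) :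
    iteratedFDeriv ℝ 2 (fun y => √(g y)) x ![u, v] =
      g'' u / (2 * √(g x)) - g' x u * g' x v / (4 * √(g x) ^ 3) := by
  have hs : 0 < √(g x) := Real.sqrt_pos.2 (hpos x)
  have hinv : HasFDerivAt (fun y => (2 * √(g y))⁻¹) _ x :=
    (hasDerivAt_inv (by positivity)).comp_hasFDerivAt x
      (((hg' x).sqrt (hpos x).ne').const_mul 2)
  have hD := (hg''.fun_mul hinv).congr_of_eventuallyEq <| .of_forall fun y => by
    change fderiv ℝ (fun y => √(g y)) y v = g' y v * (2 * √(g y))⁻¹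
    rw [((hg' y).sqrt (hpos y).ne').fderiv]
    simp [div_eq_mul_inv, mul_comm]
  rw [iteratedFDeriv_two_apply_of_hasFDerivAt u v
    (((hg.sqrt fun y => (hpos y).ne').fderiv_right le_rfl).differentiable one_ne_zero x) hD]
  simp only [one_div, _root_.mul_inv_rev, neg_smul, smul_neg, _root_.add_apply, _root_.neg_apply,
    _root_.smul_apply, smul_eq_mul]
  field_simp
  ring

end SqrtHessian

lemma abs_sum_le_card_mul {ι : Type*} [Fintype ι] {f : ι → ℝ} {c : ℝ} (h : ∀ i, |f i| ≤ c) :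
    |∑ i, f i| ≤ Fintype.card ι * c :=
  (Finset.abs_sum_le_sum_abs _ _).trans <|
    (Finset.sum_le_card_nsmul _ _ c fun i _ => h i).trans_eq (by simp)

section Gram

variable {m n : Type*} [Fintype m] [Fintype n]

noncomputable def entryCLM (i : m) (j : n) : Matrix m n ℝ →L[ℝ] ℝ :=
  (entryLinearMap ℝ ℝ i j).toContinuousLinearMap

@[simp] lemma entryCLM_apply (i : m) (j : n) (w : Matrix m n ℝ) : entryCLM i j w = w i j := rfl

noncomputable def gramDefect [DecidableEq n] (R : Matrix m n ℝ) : Matrix n n ℝ := Rᵀ * R - 1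

noncomputable def gramDeriv (R : Matrix m n ℝ) (p q : n) : Matrix m n ℝ →L[ℝ] ℝ :=
  ∑ k, (R k p • entryCLM k q + R k q • entryCLM k p)

lemma gramDeriv_apply (R w : Matrix m n ℝ) (p q : n) :
    gramDeriv R p q w = ∑ k, (R k p * w k q + R k q * w k p) := by
  simp [gramDeriv]

lemma gramDeriv_comm (R w : Matrix m n ℝ) (p q : n) : gramDeriv R p q w = gramDeriv w p q R := by
  simp only [gramDeriv_apply]
  exact Finset.sum_congr rfl fun k _ => by ring

lemma hasFDerivAt_gramDefect_apply [DecidableEq n] (R : Matrix m n ℝ) (p q : n) :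
    HasFDerivAt (fun S : Matrix m n ℝ => gramDefect S p q) (gramDeriv R p q) R := by
  simp only [gramDefect, Matrix.sub_apply, mul_apply, transpose_apply, gramDeriv]
  exact (HasFDerivAt.fun_sum fun k _ =>
    (entryCLM k p).hasFDerivAt.mul (entryCLM k q).hasFDerivAt).sub_const _

lemma contDiff_gramDefect_apply [DecidableEq n] {N : WithTop ℕ∞} (p q : n) :
    ContDiff ℝ N (fun S : Matrix m n ℝ => gramDefect S p q) := by
  simp only [gramDefect, Matrix.sub_apply, mul_apply, transpose_apply]
  exact (ContDiff.sum fun k _ => (entryCLM k p).contDiff.mul (entryCLM k q).contDiff).sub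
    contDiff_const

lemma abs_gramDeriv_le (R w : Matrix m n ℝ) (p q : n) :
    |gramDeriv R p q w| ≤ Fintype.card m * (2 * ‖R‖ * ‖w‖) := by
  rw [gramDeriv_apply]
  refine abs_sum_le_card_mul fun k => (abs_add_le _ _).trans ?_
  simp only [← Real.norm_eq_abs, norm_mul]
  rw [two_mul, add_mul]
  gcongr <;> exact norm_entry_le_entrywise_sup_norm _

end Gram

lemma frobSq_nonneg (A : Matrix (Fin 3) (Fin 3) ℝ) : 0 ≤ frobSq A :=
  Finset.sum_nonneg fun _ _ => Finset.sum_nonneg fun _ _ => sq_nonneg _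

lemma sq_le_frobSq (A : Matrix (Fin 3) (Fin 3) ℝ) (i j : Fin 3) : A i j ^ 2 ≤ frobSq A :=
  (Finset.single_le_sum (f := fun j => A i j ^ 2) (fun _ _ => sq_nonneg _) (Finset.mem_univ j)).trans
    (Finset.single_le_sum (f := fun i => ∑ j, A i j ^ 2)
      (fun _ _ => Finset.sum_nonneg fun _ _ => sq_nonneg _) (Finset.mem_univ i))

lemma norm_single_one_le {m n : Type*} [Fintype m] [Fintype n] [DecidableEq m] [DecidableEq n]
    (i : m) (j : n) : ‖Matrix.single i j (1 : ℝ)‖ ≤ 1 :=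
  (norm_le_iff zero_le_one).2 fun k l => by
    rw [Matrix.single_apply]
    split_ifs <;> simp

lemma abs_sum_sum_fin_three_le {f : Fin 3 → Fin 3 → ℝ} {c : ℝ} (h : ∀ p q, |f p q| ≤ c) :
    |∑ p, ∑ q, f p q| ≤ 9 * c := by
  have := abs_sum_le_card_mul fun p => abs_sum_le_card_mul fun q => h p q
  simp only [Fintype.card_fin, Nat.cast_ofNat] at this
  linarith

lemma abs_gramDeriv_apply_le_six (S w : Matrix (Fin 3) (Fin 3) ℝ) (p q : Fin 3) :
    |gramDeriv S p q w| ≤ 6 * ‖S‖ * ‖w‖ :=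
  (abs_gramDeriv_le S w p q).trans_eq (by simp only [Fintype.card_fin, Nat.cast_ofNat]; ring)

section P1

noncomputable def P1sq (a : ℝ) (R : Matrix (Fin 3) (Fin 3) ℝ) : ℝ := frobSq (gramDefect R) + a

noncomputable def P1sqDeriv (R : Matrix (Fin 3) (Fin 3) ℝ) : Matrix (Fin 3) (Fin 3) ℝ →L[ℝ] ℝ :=
  ∑ p, ∑ q, (2 * gramDefect R p q) • gramDeriv R p q

noncomputable def P1sqHess (R v : Matrix (Fin 3) (Fin 3) ℝ) : Matrix (Fin 3) (Fin 3) ℝ →L[ℝ] ℝ :=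
  ∑ p, ∑ q, ((2 * gramDefect R p q) • gramDeriv v p q + (2 * gramDeriv R p q v) • gramDeriv R p q)

variable {a : ℝ} (R u v : Matrix (Fin 3) (Fin 3) ℝ)

lemma P1sq_pos (ha : 0 < a) : 0 < P1sq a R :=
  add_pos_of_nonneg_of_pos (frobSq_nonneg _) ha

lemma contDiff_P1sq (a : ℝ) : ContDiff ℝ 2 (P1sq a) :=
  (ContDiff.sum fun p _ => ContDiff.sum fun q _ => (contDiff_gramDefect_apply p q).pow 2).add
    contDiff_const

lemma P1sqDeriv_apply :
    P1sqDeriv R u = ∑ p, ∑ q, 2 * gramDefect R p q * gramDeriv R p q u := by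
  simp [P1sqDeriv, mul_assoc]

lemma P1sqHess_apply : P1sqHess R v u = ∑ p, ∑ q,
    (2 * gramDefect R p q * gramDeriv v p q u + 2 * gramDeriv R p q v * gramDeriv R p q u) := by
  simp [P1sqHess, mul_assoc]

-- The calculus lemmas produce linear maps over the normed-space module structure of matrices,
-- `P1sqDeriv` and `P1sqHess` are over `Matrix.module`; these agree only up to unfolding, so they are
-- compared by `Finset.sum_congr` and `congr` rather than by `rw` or `module`.
lemma hasFDerivAt_P1sq (a : ℝ) : HasFDerivAt (P1sq a) (P1sqDeriv R) R := by
  refine ((HasFDerivAt.fun_sum fun p _ => HasFDerivAt.fun_sum fun q _ =>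
    (hasFDerivAt_gramDefect_apply R p q).pow 2).add_const a).congr_fderiv ?_
  exact Finset.sum_congr rfl fun p _ => Finset.sum_congr rfl fun q _ => by congr 1; ring

lemma hasFDerivAt_P1sqDeriv_apply : HasFDerivAt (fun S => P1sqDeriv S v) (P1sqHess R v) R := by
  have h : HasFDerivAt (fun S => ∑ p, ∑ q, 2 * gramDefect S p q * gramDeriv v p q S) _ R :=
    HasFDerivAt.fun_sum fun p _ => HasFDerivAt.fun_sum fun q _ =>
      ((hasFDerivAt_gramDefect_apply R p q).const_mul 2).mul (gramDeriv v p q).hasFDerivAt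
  refine (h.congr_of_eventuallyEq (.of_forall fun S => ?_)).congr_fderiv ?_
  · simp [P1sqDeriv_apply, gramDeriv_comm S v]
  · refine Finset.sum_congr rfl fun p _ => Finset.sum_congr rfl fun q _ => ?_
    rw [gramDeriv_comm v R]
    congr 1
    exact (smul_smul _ _ _).trans (congrArg (· • _) (mul_comm _ _))

lemma iteratedFDeriv_two_P1_apply (ha : 0 < a) :
    iteratedFDeriv ℝ 2 (P1 a) R ![u, v] =
      P1sqHess R v u / (2 * P1 a R) - P1sqDeriv R u * P1sqDeriv R v / (4 * P1 a R ^ 3) :=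
  iteratedFDeriv_two_sqrt_apply (contDiff_P1sq a) (P1sq_pos · ha) (hasFDerivAt_P1sq · a)
    (hasFDerivAt_P1sqDeriv_apply R v) u

lemma sqrt_le_P1 : √a ≤ P1 a R :=
  Real.sqrt_le_sqrt (le_add_of_nonneg_left (frobSq_nonneg _))

lemma abs_gramDefect_le_P1 (ha : 0 ≤ a) (p q : Fin 3) : |gramDefect R p q| ≤ P1 a R :=
  Real.abs_le_sqrt ((sq_le_frobSq _ p q).trans (le_add_of_nonneg_right ha))

lemma sq_norm_le_P1_add_one (ha : 0 ≤ a) : ‖R‖ ^ 2 ≤ P1 a R + 1 := by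
  have hcol : ∀ k p, R k p ^ 2 ≤ P1 a R + 1 := fun k p => calc
    R k p ^ 2 ≤ ∑ l, R l p ^ 2 :=
      Finset.single_le_sum (f := fun l => R l p ^ 2) (fun _ _ => sq_nonneg _) (Finset.mem_univ k)
    _ = gramDefect R p p + 1 := by simp [gramDefect, mul_apply, sq]
    _ ≤ P1 a R + 1 := by linarith [le_abs_self (gramDefect R p p), abs_gramDefect_le_P1 R ha p p]
  have hnorm : ‖R‖ ≤ √(P1 a R + 1) :=
    (norm_le_iff (Real.sqrt_nonneg _)).2 fun k p => Real.abs_le_sqrt (hcol k p)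
  calc ‖R‖ ^ 2 ≤ √(P1 a R + 1) ^ 2 := by gcongr
    _ = P1 a R + 1 := Real.sq_sqrt (add_nonneg (Real.sqrt_nonneg _) zero_le_one)

lemma abs_mul_apply_le_P1_add_one (ha : 0 ≤ a) (i j k l : Fin 3) :
    |R i j * R k l| ≤ P1 a R + 1 := by
  rw [abs_mul, ← Real.norm_eq_abs, ← Real.norm_eq_abs]
  calc ‖R i j‖ * ‖R k l‖ ≤ ‖R‖ * ‖R‖ := by
        gcongr <;> exact norm_entry_le_entrywise_sup_norm R
    _ = ‖R‖ ^ 2 := (sq _).symm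
    _ ≤ P1 a R + 1 := sq_norm_le_P1_add_one R ha

lemma abs_P1sqDeriv_apply_le (ha : 0 ≤ a) : |P1sqDeriv R u| ≤ 108 * P1 a R * ‖R‖ * ‖u‖ := by
  rw [P1sqDeriv_apply]
  refine (abs_sum_sum_fin_three_le (c := 2 * P1 a R * (6 * ‖R‖ * ‖u‖)) fun p q => ?_).trans_eq
    (by ring)
  rw [abs_mul, abs_mul, abs_two]
  gcongr
  · exact mul_nonneg zero_le_two (Real.sqrt_nonneg _)
  exacts [abs_gramDefect_le_P1 R ha p q, abs_gramDeriv_apply_le_six R u p q]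

lemma abs_P1sqHess_apply_le (ha : 0 ≤ a) :
    |P1sqHess R v u| ≤ (108 * P1 a R + 648 * ‖R‖ ^ 2) * ‖u‖ * ‖v‖ := by
  rw [P1sqHess_apply]
  refine (abs_sum_sum_fin_three_le
    (c := 2 * P1 a R * (6 * ‖v‖ * ‖u‖) + 2 * (6 * ‖R‖ * ‖v‖) * (6 * ‖R‖ * ‖u‖))
    fun p q => (abs_add_le _ _).trans ?_).trans_eq (by ring)
  rw [abs_mul, abs_mul, abs_mul, abs_mul, abs_two]
  gcongr
  · exact mul_nonneg zero_le_two (Real.sqrt_nonneg _)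
  exacts [abs_gramDefect_le_P1 R ha p q, abs_gramDeriv_apply_le_six v u p q,
    abs_gramDeriv_apply_le_six R v p q, abs_gramDeriv_apply_le_six R u p q]

lemma abs_iteratedFDeriv_two_P1_le (ha : 0 < a) :
    |iteratedFDeriv ℝ 2 (P1 a) R ![u, v]| ≤ (3294 + 3240 / √a) * (‖u‖ * ‖v‖) := by
  have hs : 0 < P1 a R := (Real.sqrt_pos.2 ha).trans_le (sqrt_le_P1 R)
  have hR := sq_norm_le_P1_add_one R ha.le
  have hH := abs_P1sqHess_apply_le R u v ha.le
  have hDu := abs_P1sqDeriv_apply_le R u ha.le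
  have hDv := abs_P1sqDeriv_apply_le R v ha.le
  rw [iteratedFDeriv_two_P1_apply R u v ha]
  set s := P1 a R
  calc _ ≤ |P1sqHess R v u| / (2 * s) + |P1sqDeriv R u| * |P1sqDeriv R v| / (4 * s ^ 3) := by
        refine (abs_sub _ _).trans_eq ?_
        rw [abs_div, abs_div, abs_of_pos (by positivity : 0 < 2 * s),
          abs_of_pos (by positivity : 0 < 4 * s ^ 3), abs_mul]
    _ ≤ (108 * s + 648 * ‖R‖ ^ 2) * ‖u‖ * ‖v‖ / (2 * s) +
          108 * s * ‖R‖ * ‖u‖ * (108 * s * ‖R‖ * ‖v‖) / (4 * s ^ 3) := by gcongr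
    _ = (54 + 3240 * (‖R‖ ^ 2 / s)) * (‖u‖ * ‖v‖) := by field_simp; ring
    _ ≤ (54 + 3240 * ((s + 1) / s)) * (‖u‖ * ‖v‖) := by gcongr
    _ = (3294 + 3240 / s) * (‖u‖ * ‖v‖) := by field_simp; ring
    _ ≤ (3294 + 3240 / √a) * (‖u‖ * ‖v‖) := by gcongr; exact sqrt_le_P1 R

end P1

/-- `P₁` is C² with Hessian entries uniformly bounded by a constant depending only
on `a`; in particular `|[A(R)]_{ab}|/P₁ ≤ 1` and `|R_{ab}R_{cd}|/P₁ ≤ (3 + 3/√a)/2`. -/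
theorem stmt2 (a : ℝ) (ha : 0 < a) :
    ContDiff ℝ 2 (P1 a) ∧
    (∃ C : ℝ, ∀ (R : Matrix (Fin 3) (Fin 3) ℝ) (i j k l : Fin 3),
      |(iteratedFDeriv ℝ 2 (P1 a) R)
        ![Matrix.single i j (1 : ℝ), Matrix.single k l (1 : ℝ)]| ≤ C) ∧
    (∀ (R : Matrix (Fin 3) (Fin 3) ℝ) (i j : Fin 3),
      |(Rᵀ * R - 1) i j| / P1 a R ≤ 1) ∧
    (∀ (R : Matrix (Fin 3) (Fin 3) ℝ) (i j k l : Fin 3),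
      |R i j * R k l| / P1 a R ≤ (3 + 3 / Real.sqrt a) / 2) := by
  have hsa : 0 < √a := Real.sqrt_pos.2 ha
  have hP : ∀ R, 0 < P1 a R := fun R => hsa.trans_le (sqrt_le_P1 R)
  refine ⟨(contDiff_P1sq a).sqrt fun R => (P1sq_pos R ha).ne',
    ⟨3294 + 3240 / √a, fun R i j k l => ?_⟩, fun R i j => ?_, fun R i j k l => ?_⟩
  · calc _ ≤ (3294 + 3240 / √a) * (‖single i j (1 : ℝ)‖ * ‖single k l (1 : ℝ)‖) :=
          abs_iteratedFDeriv_two_P1_le R _ _ ha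
      _ ≤ (3294 + 3240 / √a) * (1 * 1) := by gcongr <;> exact norm_single_one_le _ _
      _ = 3294 + 3240 / √a := by ring
  · exact div_le_one_of_le₀ (abs_gramDefect_le_P1 R ha.le i j) (hP R).le
  · rw [div_le_iff₀ (hP R)]
    have h := (one_le_div₀ hsa).2 (sqrt_le_P1 R)
    calc |R i j * R k l| ≤ P1 a R + 1 := abs_mul_apply_le_P1_add_one R ha.le i j k l
      _ ≤ 3 / 2 * P1 a R + 3 / 2 * (P1 a R / √a) := by linarith [hP R]
      _ = (3 + 3 / √a) / 2 * P1 a R := by ring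
end

section
/- For any vector x ∈ ℝⁿ and constants a ∈ ℝ, b > 0, the function P₃(x) = √((‖x‖² + a)² + b) is twice continuously differentiable and its Hessian satisfies −L·I ⪯ ∇²P₃(x) ⪯ L·I for all x, where L = 2 + 8 + 8|a|/√b = 10 + 8|a|/√b. -/
open scoped RealInnerProductSpace

/-!
`P₃` is the radial function `x ↦ φ (‖x‖²)` with `φ u = √((u + a)² + b)`, so its Hessian form is
`2 φ'(‖x‖²) ‖v‖² + 4 φ''(‖x‖²) ⟪x, v⟫²`. With `s = u + a` and `r = √(s² + b)` one has
`φ' = s / r ∈ [-1, 1]` and `φ'' = b / r³ ≥ 0`. By Cauchy–Schwarz the second term is at most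
`4 b ‖x‖² / r³ · ‖v‖²`, and `‖x‖² ≤ r + |a|`, `√b ≤ r` give `b ‖x‖² / r³ ≤ 1 + |a| / √b`;
so the form is bounded in absolute value by `(6 + 4|a|/√b) ‖v‖²`.
-/

section RadialFunction

variable {E : Type*} [NormedAddCommGroup E] [InnerProductSpace ℝ E]

theorem hasGradientAt_comp_norm_sq [CompleteSpace E] {φ : ℝ → ℝ} {φ' : ℝ} (x : E)
    (h : HasDerivAt φ φ' (‖x‖ ^ 2)) :
    HasGradientAt (fun y => φ (‖y‖ ^ 2)) ((2 * φ') • x) x := by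
  rw [hasGradientAt_iff_hasFDerivAt]
  refine (h.comp_hasFDerivAt x (hasStrictFDerivAt_norm_sq x).hasFDerivAt).congr_fderiv ?_
  ext v
  simp only [smul_apply, coe_innerSL_apply, nsmul_eq_mul, smul_eq_mul,
    map_smul, InnerProductSpace.toDual_apply_apply]
  ring

theorem gradient_comp_norm_sq [CompleteSpace E] {φ φ' : ℝ → ℝ} (h : ∀ u, HasDerivAt φ (φ' u) u) :
    gradient (fun y : E => φ (‖y‖ ^ 2)) = fun x => (2 * φ' (‖x‖ ^ 2)) • x :=
  gradient_eq fun x => hasGradientAt_comp_norm_sq x (h _)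

theorem hasFDerivAt_comp_norm_sq_smul_self {ψ : ℝ → ℝ} {ψ' : ℝ} (x : E)
    (h : HasDerivAt ψ ψ' (‖x‖ ^ 2)) :
    HasFDerivAt (fun y => ψ (‖y‖ ^ 2) • y)
      (ψ (‖x‖ ^ 2) • ContinuousLinearMap.id ℝ E + (ψ' • 2 • innerSL ℝ x).smulRight x) x :=
  (h.comp_hasFDerivAt x (hasStrictFDerivAt_norm_sq x).hasFDerivAt).smul (hasFDerivAt_id x)

theorem inner_fderiv_gradient_comp_norm_sq [CompleteSpace E] {φ φ' : ℝ → ℝ} {φ'' : ℝ}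
    (hφ : ∀ u, HasDerivAt φ (φ' u) u) (x : E) (hφ' : HasDerivAt φ' φ'' (‖x‖ ^ 2)) (v : E) :
    ⟪fderiv ℝ (gradient fun y => φ (‖y‖ ^ 2)) x v, v⟫ =
      2 * φ' (‖x‖ ^ 2) * ‖v‖ ^ 2 + 4 * φ'' * ⟪x, v⟫ ^ 2 := by
  rw [gradient_comp_norm_sq hφ,
    (hasFDerivAt_comp_norm_sq_smul_self x (hφ'.const_mul 2)).fderiv]
  simp only [add_apply, smul_apply,
    ContinuousLinearMap.id_apply, ContinuousLinearMap.smulRight_apply, coe_innerSL_apply,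
    nsmul_eq_mul, smul_eq_mul, inner_add_left, real_inner_smul_left, real_inner_self_eq_norm_sq]
  ring

end RadialFunction

section ShiftedSqrt

variable {a b : ℝ}

theorem hasDerivAt_sqrt_add_sq_add (hb : 0 < b) (u : ℝ) :
    HasDerivAt (fun u => √((u + a) ^ 2 + b)) ((u + a) / √((u + a) ^ 2 + b)) u := by
  have hq : 0 < (u + a) ^ 2 + b := by positivity
  refine (((((hasDerivAt_id' u).add_const a).pow 2).add_const b).sqrt hq.ne').congr_deriv ?_
  simp only [Pi.pow_apply]
  field_simp
  ring

theorem hasDerivAt_add_div_sqrt_sq_add (hb : 0 < b) (u : ℝ) :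
    HasDerivAt (fun u => (u + a) / √((u + a) ^ 2 + b)) (b / √((u + a) ^ 2 + b) ^ 3) u := by
  have hq : 0 < (u + a) ^ 2 + b := by positivity
  have hr : 0 < √((u + a) ^ 2 + b) := Real.sqrt_pos.2 hq
  refine (((hasDerivAt_id' u).add_const a).div (hasDerivAt_sqrt_add_sq_add hb u)
    hr.ne').congr_deriv ?_
  field_simp
  rw [Real.sq_sqrt hq.le]
  ring

theorem abs_div_sqrt_sq_add_le_one (s : ℝ) (hb : 0 ≤ b) : |s / √(s ^ 2 + b)| ≤ 1 := by
  rw [abs_div, abs_of_nonneg (Real.sqrt_nonneg _), ← Real.sqrt_sq_eq_abs]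
  exact div_le_one_of_le₀ (Real.sqrt_le_sqrt (by linarith)) (Real.sqrt_nonneg _)

theorem mul_div_sqrt_add_sq_add_pow_three_le (hb : 0 < b) (t : ℝ) :
    b * t / √((t + a) ^ 2 + b) ^ 3 ≤ 1 + |a| / √b := by
  set r := √((t + a) ^ 2 + b)
  have hrb : √b ≤ r := Real.sqrt_le_sqrt (by nlinarith)
  have hsb : 0 < √b := Real.sqrt_pos.2 hb
  have hr : 0 < r := hsb.trans_le hrb
  have hr2 : r ^ 2 = (t + a) ^ 2 + b := Real.sq_sqrt (by positivity)
  have htr : t ≤ r + |a| := by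
    have : |t + a| ≤ r := by
      rw [← Real.sqrt_sq_eq_abs]
      exact Real.sqrt_le_sqrt (by linarith)
    linarith [le_abs_self (t + a), neg_abs_le a]
  have hb_r2 : b / r ^ 2 ≤ 1 := div_le_one_of_le₀ (by nlinarith) (by positivity)
  have hb_r3 : b / r ^ 3 ≤ 1 / √b := by
    rw [div_le_div_iff₀ (by positivity) hsb]
    nlinarith [pow_le_pow_left₀ hsb.le hrb 3, Real.sq_sqrt hb.le]
  calc b * t / r ^ 3 ≤ b * (r + |a|) / r ^ 3 := by gcongr
    _ = b / r ^ 2 + b / r ^ 3 * |a| := by field_simp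
    _ ≤ 1 + 1 / √b * |a| := by gcongr
    _ = 1 + |a| / √b := by ring

end ShiftedSqrt

theorem abs_inner_fderiv_gradient_sqrt_le {E : Type*} [NormedAddCommGroup E]
    [InnerProductSpace ℝ E] [CompleteSpace E] (a : ℝ) {b : ℝ} (hb : 0 < b) (x v : E) :
    |⟪fderiv ℝ (gradient fun y : E => √((‖y‖ ^ 2 + a) ^ 2 + b)) x v, v⟫| ≤
      (6 + 4 * |a| / √b) * ‖v‖ ^ 2 := by
  rw [inner_fderiv_gradient_comp_norm_sq (hasDerivAt_sqrt_add_sq_add hb) x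
    (hasDerivAt_add_div_sqrt_sq_add hb _)]
  set t := ‖x‖ ^ 2
  set r := √((t + a) ^ 2 + b)
  have hslope : |(t + a) / r| ≤ 1 := abs_div_sqrt_sq_add_le_one _ hb.le
  have hcurv : b * t / r ^ 3 ≤ 1 + |a| / √b := mul_div_sqrt_add_sq_add_pow_three_le hb t
  have hcs : ⟪x, v⟫ ^ 2 ≤ t * ‖v‖ ^ 2 := by
    calc ⟪x, v⟫ ^ 2 = |⟪x, v⟫| ^ 2 := (sq_abs _).symm
      _ ≤ (‖x‖ * ‖v‖) ^ 2 := by gcongr; exact abs_real_inner_le_norm x v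
      _ = t * ‖v‖ ^ 2 := by ring
  calc |2 * ((t + a) / r) * ‖v‖ ^ 2 + 4 * (b / r ^ 3) * ⟪x, v⟫ ^ 2|
      ≤ 2 * ‖v‖ ^ 2 + 4 * (b / r ^ 3) * (t * ‖v‖ ^ 2) := by
        refine (abs_add_le _ _).trans (add_le_add ?_ ?_)
        · rw [abs_mul, abs_mul, abs_of_nonneg (sq_nonneg ‖v‖), abs_two]
          gcongr ?_ * _
          linarith
        · rw [abs_of_nonneg (by positivity)]
          gcongr
    _ = 2 * ‖v‖ ^ 2 + 4 * (b * t / r ^ 3) * ‖v‖ ^ 2 := by ring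
    _ ≤ 2 * ‖v‖ ^ 2 + 4 * (1 + |a| / √b) * ‖v‖ ^ 2 := by gcongr
    _ = (6 + 4 * |a| / √b) * ‖v‖ ^ 2 := by ring

/-- `P₃(x) = √((‖x‖² + a)² + b)` is C² with Hessian eigenvalues bounded by
`L = 10 + 8|a|/√b` in absolute value. -/
theorem stmt3 {n : ℕ} (a b : ℝ) (hb : 0 < b) :
    ContDiff ℝ 2 (fun x : EuclideanSpace ℝ (Fin n) =>
      Real.sqrt ((‖x‖ ^ 2 + a) ^ 2 + b)) ∧
    ∀ (x v : EuclideanSpace ℝ (Fin n)),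
      |⟪(fderiv ℝ (gradient (fun x : EuclideanSpace ℝ (Fin n) =>
          Real.sqrt ((‖x‖ ^ 2 + a) ^ 2 + b))) x) v, v⟫| ≤
        (10 + 8 * |a| / Real.sqrt b) * ‖v‖ ^ 2 := by
  refine ⟨?_, fun x v => (abs_inner_fderiv_gradient_sqrt_le a hb x v).trans ?_⟩
  · exact ((((contDiff_norm_sq ℝ).add contDiff_const).pow 2).add contDiff_const).sqrt
      fun x => by positivity
  · have : 0 ≤ |a| / √b := by positivity
    gcongr ?_ * _
    rw [mul_div_assoc, mul_div_assoc]
    linarith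
end

section
/- For any two vectors x, y ∈ ℝⁿ and any ε_r > 0: (i) |1/√(‖x‖² + ε_r) − 1/√(‖y‖² + ε_r)| ≤ ‖x − y‖/ε_r, and (ii) ‖x/√(‖x‖² + ε_r) − y/√(‖y‖² + ε_r)‖ ≤ (2/√ε_r)·‖x − y‖. -/
/-- Lipschitz bounds for the regularized inverse norm and normalized vector. -/
theorem stmt6 {n : ℕ} (x y : EuclideanSpace ℝ (Fin n)) (εr : ℝ) (hεr : 0 < εr) :
    |1 / Real.sqrt (‖x‖ ^ 2 + εr) - 1 / Real.sqrt (‖y‖ ^ 2 + εr)| ≤ ‖x - y‖ / εr ∧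
    ‖(Real.sqrt (‖x‖ ^ 2 + εr))⁻¹ • x - (Real.sqrt (‖y‖ ^ 2 + εr))⁻¹ • y‖ ≤
      (2 / Real.sqrt εr) * ‖x - y‖ := by
  set a := Real.sqrt (‖x‖ ^ 2 + εr) with ha_def
  set b := Real.sqrt (‖y‖ ^ 2 + εr) with hb_def
  have ha : 0 < a := Real.sqrt_pos.2 (by positivity)
  have hb : 0 < b := Real.sqrt_pos.2 (by positivity)
  have hsε : 0 < Real.sqrt εr := Real.sqrt_pos.2 hεr
  have ha2 : a ^ 2 = ‖x‖ ^ 2 + εr := Real.sq_sqrt (by positivity)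
  have hb2 : b ^ 2 = ‖y‖ ^ 2 + εr := Real.sq_sqrt (by positivity)
  have hsε2 : Real.sqrt εr ^ 2 = εr := Real.sq_sqrt hεr.le
  have hxa : ‖x‖ ≤ a := by nlinarith [norm_nonneg x, ha.le]
  have hyb : ‖y‖ ≤ b := by nlinarith [norm_nonneg y, hb.le]
  have hsεa : Real.sqrt εr ≤ a := by nlinarith [norm_nonneg x, ha.le, hsε.le]
  have hsεb : Real.sqrt εr ≤ b := by nlinarith [norm_nonneg y, hb.le, hsε.le]
  have htri : ‖x‖ - ‖y‖ ≤ ‖x - y‖ := norm_sub_norm_le x y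
  have htri' : ‖y‖ - ‖x‖ ≤ ‖x - y‖ := by
    have := norm_sub_norm_le y x
    rwa [norm_sub_rev] at this
  have key : |b - a| ≤ ‖x - y‖ := by
    rw [abs_sub_le_iff]
    constructor
    · nlinarith [norm_nonneg x, norm_nonneg y, mul_nonneg (norm_nonneg (x - y)) (norm_nonneg y)]
    · nlinarith [norm_nonneg x, norm_nonneg y, mul_nonneg (norm_nonneg (x - y)) (norm_nonneg x)]
  have hab : εr ≤ a * b := by nlinarith [hsε.le]
  constructor
  · rw [div_sub_div _ _ ha.ne' hb.ne', abs_div, abs_of_pos (mul_pos ha hb)]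
    have : |1 * b - a * 1| = |b - a| := by ring_nf
    rw [this]
    exact div_le_div₀ (norm_nonneg _) key hεr hab
  · have expand : a⁻¹ • x - b⁻¹ • y = a⁻¹ • (x - y) + (a⁻¹ - b⁻¹) • y := by
      rw [smul_sub, sub_smul]; abel
    rw [expand]
    have h1 : ‖a⁻¹ • (x - y)‖ ≤ ‖x - y‖ / a := by
      rw [norm_smul, Real.norm_eq_abs, abs_inv, abs_of_pos ha, inv_mul_eq_div]
    have h2 : ‖(a⁻¹ - b⁻¹) • y‖ ≤ ‖x - y‖ / a := by
      rw [norm_smul, Real.norm_eq_abs]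
      have hinv : a⁻¹ - b⁻¹ = (b - a) / (a * b) := by
        field_simp
      rw [hinv, abs_div, abs_of_pos (mul_pos ha hb), div_mul_eq_mul_div,
        div_le_div_iff₀ (mul_pos ha hb) ha]
      nlinarith [mul_le_mul key hyb (norm_nonneg y) (norm_nonneg (x - y)),
        mul_le_mul_of_nonneg_right
          (mul_le_mul key hyb (norm_nonneg y) (norm_nonneg (x - y))) ha.le]
    have h3 : ‖x - y‖ / a ≤ ‖x - y‖ / Real.sqrt εr :=
      div_le_div_of_nonneg_left (norm_nonneg _) hsε hsεa
    calc ‖a⁻¹ • (x - y) + (a⁻¹ - b⁻¹) • y‖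
        ≤ ‖a⁻¹ • (x - y)‖ + ‖(a⁻¹ - b⁻¹) • y‖ := norm_add_le _ _
      _ ≤ ‖x - y‖ / a + ‖x - y‖ / a := add_le_add h1 h2
      _ ≤ ‖x - y‖ / Real.sqrt εr + ‖x - y‖ / Real.sqrt εr := add_le_add h3 h3
      _ = (2 / Real.sqrt εr) * ‖x - y‖ := by ring
end

section
/- Let M be a symmetric positive definite matrix, L > 0, ε > 0, and suppose θ_i satisfies the ε-perturbed critical-point equation (θ_i − θ_{γ})/δ − v + δ·M⁻¹·∇P̄(θ_i) = r with ‖M r/δ‖ ≤ ε, where P̄ is L-weakly convex and twice differentiable. Define the Hamiltonians H_i = (1/2)‖(θ_i − θ_γ)/δ‖²_M + P̄(θ_i) and H_γ = (1/2)‖v‖²_M + P̄(θ_γ). Then H_i − H_γ ≤ ((Lδ² + δ)/(2σ_min(M)))·‖(θ_i − θ_γ)/δ‖²_M + δε²/2. -/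
/-!
Write `w = (θᵢ - θ_γ)/δ`. Multiplying the critical-point equation by `M` gives
`δ ∇P̄(θᵢ) = M r - M w + M v`, so weak convexity bounds `P̄(θᵢ) - P̄(θ_γ)` by
`wᵀM r - ‖w‖²_M + wᵀM v + (Lδ²/2)|w|²`. The cross term `wᵀM v` is absorbed by
`(‖w‖²_M + ‖v‖²_M)/2`, the residual term `wᵀM r` by Young's inequality, and finally
`|w|² ≤ ‖w‖²_M / σ`.
-/

open Matrix

namespace Matrix

variable {ι : Type*} [Fintype ι]

theorem posDef_of_coercive {M : Matrix ι ι ℝ} (hM : M.IsSymm) {σ : ℝ} (hσ : 0 < σ)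
    (hcoer : ∀ x : ι → ℝ, σ * (x ⬝ᵥ x) ≤ x ⬝ᵥ (M *ᵥ x)) : M.PosDef := by
  refine .of_dotProduct_mulVec_pos (isHermitian_iff_isSymm.mpr hM) fun x hx => ?_
  have : 0 < x ⬝ᵥ x := by simpa using dotProduct_star_self_pos_iff.mpr hx
  simpa using (mul_pos hσ this).trans_le (hcoer x)

theorem PosSemidef.two_mul_dotProduct_mulVec_le {M : Matrix ι ι ℝ} (hM : M.PosSemidef)
    (x y : ι → ℝ) :
    2 * (x ⬝ᵥ (M *ᵥ y)) ≤ x ⬝ᵥ (M *ᵥ x) + y ⬝ᵥ (M *ᵥ y) := by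
  have hsymm : y ⬝ᵥ (M *ᵥ x) = x ⬝ᵥ (M *ᵥ y) := by
    rw [dotProduct_mulVec, ← mulVec_transpose, dotProduct_comm,
      ← conjTranspose_eq_transpose_of_trivial, hM.1.eq]
  have := hM.dotProduct_mulVec_nonneg (x - y)
  simp only [star_trivial, mulVec_sub, dotProduct_sub, sub_dotProduct, hsymm] at this
  linarith

end Matrix

theorem dotProduct_le_of_sqrt_le {ι : Type*} [Fintype ι] [DecidableEq ι] {δ ε : ℝ}
    (hδ : 0 < δ) (x y : ι → ℝ) (hy : √(y ⬝ᵥ y) ≤ δ * ε) :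
    x ⬝ᵥ y ≤ δ / 2 * (x ⬝ᵥ x) + δ * ε ^ 2 / 2 := by
  have hyoung := Matrix.PosSemidef.one.two_mul_dotProduct_mulVec_le (δ • x) y
  have hy2 : y ⬝ᵥ y ≤ (δ * ε) ^ 2 := (Real.sqrt_le_iff.mp hy).2
  simp only [one_mulVec, smul_dotProduct, dotProduct_smul, smul_eq_mul] at hyoung
  have : 2 * δ * (x ⬝ᵥ y) ≤ 2 * δ * (δ / 2 * (x ⬝ᵥ x) + δ * ε ^ 2 / 2) := by linarith
  exact le_of_mul_le_mul_left this (by positivity)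

theorem stmt7_general {n : ℕ} (M : Matrix (Fin n) (Fin n) ℝ) (hMsymm : M.IsSymm)
    (σ : ℝ) (hσ : 0 < σ)
    (hMlb : ∀ x : Fin n → ℝ, σ * (x ⬝ᵥ x) ≤ x ⬝ᵥ (M *ᵥ x))
    (P : (Fin n → ℝ) → ℝ) (gradP : (Fin n → ℝ) → (Fin n → ℝ)) (L : ℝ) (hL : 0 < L)
    (hweak : ∀ x y : Fin n → ℝ,
      P y - P x - ((y - x) ⬝ᵥ gradP y) ≤ L / 2 * ((y - x) ⬝ᵥ (y - x)))
    (ε δ : ℝ) (hδ : 0 < δ)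
    (θi θγ v r : Fin n → ℝ)
    (heq : δ⁻¹ • (θi - θγ) - v + δ • (M⁻¹ *ᵥ gradP θi) = r)
    (hr : Real.sqrt ((M *ᵥ r) ⬝ᵥ (M *ᵥ r)) / δ ≤ ε) :
    ((1 : ℝ) / 2 * ((δ⁻¹ • (θi - θγ)) ⬝ᵥ (M *ᵥ (δ⁻¹ • (θi - θγ)))) + P θi) -
    ((1 : ℝ) / 2 * (v ⬝ᵥ (M *ᵥ v)) + P θγ) ≤
      (L * δ ^ 2 + δ) / (2 * σ) *
        ((δ⁻¹ • (θi - θγ)) ⬝ᵥ (M *ᵥ (δ⁻¹ • (θi - θγ)))) + δ * ε ^ 2 / 2 := by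
  set w := δ⁻¹ • (θi - θγ) with hw
  have hM : M.PosDef := posDef_of_coercive hMsymm hσ hMlb
  have hstep : θi - θγ = δ • w := by rw [hw, smul_smul, mul_inv_cancel₀ hδ.ne', one_smul]
  have hgrad : δ • gradP θi = M *ᵥ r - M *ᵥ w + M *ᵥ v := by
    rw [← heq]
    simp only [mulVec_add, mulVec_sub, mulVec_smul, mulVec_mulVec,
      mul_nonsing_inv _ ((isUnit_iff_isUnit_det M).mp hM.isUnit), one_mulVec]
    abel
  have hP : P θi - P θγ ≤ w ⬝ᵥ (M *ᵥ r) - w ⬝ᵥ (M *ᵥ w) + w ⬝ᵥ (M *ᵥ v)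
      + L / 2 * δ ^ 2 * (w ⬝ᵥ w) := by
    have := hweak θγ θi
    rw [hstep, smul_dotProduct, ← dotProduct_smul, hgrad] at this
    simp only [dotProduct_add, dotProduct_sub, smul_dotProduct, dotProduct_smul,
      smul_eq_mul] at this
    linarith
  have hcross := hM.posSemidef.two_mul_dotProduct_mulVec_le w v
  have hres := dotProduct_le_of_sqrt_le hδ w (M *ᵥ r) ((div_le_iff₀' hδ).mp hr)
  have hcoef : (L * δ ^ 2 + δ) / 2 * (w ⬝ᵥ w) ≤ (L * δ ^ 2 + δ) / (2 * σ) * (w ⬝ᵥ (M *ᵥ w)) :=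
    calc (L * δ ^ 2 + δ) / 2 * (w ⬝ᵥ w) = (L * δ ^ 2 + δ) / (2 * σ) * (σ * (w ⬝ᵥ w)) := by
          field_simp
      _ ≤ _ := by gcongr; exact hMlb w
  linarith

/-- One-step Hamiltonian bound at an `ε`-critical point of the implicit Euler
optimization, for an `L`-weakly convex potential. -/
theorem stmt7 {n : ℕ} (M : Matrix (Fin n) (Fin n) ℝ) (hMsymm : M.IsSymm)
    (σ : ℝ) (hσ : 0 < σ)
    (hMlb : ∀ x : Fin n → ℝ, σ * (x ⬝ᵥ x) ≤ x ⬝ᵥ (M *ᵥ x))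
    (P : (Fin n → ℝ) → ℝ) (gradP : (Fin n → ℝ) → (Fin n → ℝ)) (L : ℝ) (hL : 0 < L)
    (hweak : ∀ x y : Fin n → ℝ,
      P y - P x - ((y - x) ⬝ᵥ gradP y) ≤ L / 2 * ((y - x) ⬝ᵥ (y - x)))
    (ε δ : ℝ) (hε : 0 < ε) (hδ : 0 < δ)
    (θi θγ v r : Fin n → ℝ)
    (heq : δ⁻¹ • (θi - θγ) - v + δ • (M⁻¹ *ᵥ gradP θi) = r)
    (hr : Real.sqrt ((M *ᵥ r) ⬝ᵥ (M *ᵥ r)) / δ ≤ ε) :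
    ((1 : ℝ) / 2 * ((δ⁻¹ • (θi - θγ)) ⬝ᵥ (M *ᵥ (δ⁻¹ • (θi - θγ)))) + P θi) -
    ((1 : ℝ) / 2 * (v ⬝ᵥ (M *ᵥ v)) + P θγ) ≤
      (L * δ ^ 2 + δ) / (2 * σ) *
        ((δ⁻¹ • (θi - θγ)) ⬝ᵥ (M *ᵥ (δ⁻¹ • (θi - θγ)))) + δ * ε ^ 2 / 2 :=
  stmt7_general M hMsymm σ hσ hMlb P gradP L hL hweak ε δ hδ θi θγ v r heq hr
end

section
/- If additionally a positive semi-definite damping matrix D is present, i.e., θ_i satisfies (θ_i − θ_γ)/δ − v + M⁻¹D(θ_i − θ_γ) + δ·M⁻¹∇P̄(θ_i) = r with ‖Mr/δ‖ ≤ ε and P̄ L-weakly convex, then the same one-step Hamiltonian bound holds: H_i − H_γ ≤ ((Lδ² + δ)/(2σ_min(M)))·‖(θ_i − θ_γ)/δ‖²_M + δε²/2. -/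
open Matrix

/-!
Write `u = (θᵢ - θ_γ)/δ`. Multiplying the update equation by `M` and pairing it with `u` gives
`uᵀMu - uᵀMv + δ uᵀDu + δ uᵀ∇P̄(θᵢ) = uᵀMr`. The kinetic part of `H_i - H_γ` is at most
`uᵀMu - uᵀMv` (drop `-½‖u - v‖²_M`), weak convexity bounds the potential part by
`δ uᵀ∇P̄(θᵢ) + (Lδ²/2)‖u‖²`, the damping term `δ uᵀDu` has the favourable sign, and
Cauchy–Schwarz with Young's inequality gives `uᵀMr ≤ (δ/2)‖u‖² + δε²/2`. Finally
`‖u‖² ≤ ‖u‖²_M / σ`.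
-/

namespace Matrix

variable {ι : Type*} [Fintype ι]

theorem dotProduct_self_nonneg (x : ι → ℝ) : 0 ≤ x ⬝ᵥ x :=
  Finset.sum_nonneg fun i _ => mul_self_nonneg (x i)

theorem dotProduct_le_sqrt_mul_sqrt (x y : ι → ℝ) : x ⬝ᵥ y ≤ √(x ⬝ᵥ x) * √(y ⬝ᵥ y) := by
  simpa only [dotProduct, sq] using Real.sum_mul_le_sqrt_mul_sqrt Finset.univ x y

theorem dotProduct_le_young_of_sqrt_le {x y : ι → ℝ} {δ ε : ℝ} (hδ : 0 ≤ δ)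
    (hy : √(y ⬝ᵥ y) ≤ δ * ε) : x ⬝ᵥ y ≤ δ / 2 * (x ⬝ᵥ x) + δ * ε ^ 2 / 2 := by
  have hsq := Real.sq_sqrt (dotProduct_self_nonneg x)
  calc x ⬝ᵥ y ≤ √(x ⬝ᵥ x) * (δ * ε) :=
        (dotProduct_le_sqrt_mul_sqrt x y).trans
          (mul_le_mul_of_nonneg_left hy (Real.sqrt_nonneg _))
    _ ≤ δ / 2 * (x ⬝ᵥ x) + δ * ε ^ 2 / 2 := by
        nlinarith [mul_nonneg hδ (sq_nonneg (√(x ⬝ᵥ x) - ε))]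

theorem isUnit_of_coercive [DecidableEq ι] {M : Matrix ι ι ℝ} {σ : ℝ} (hσ : 0 < σ)
    (hM : ∀ x, σ * (x ⬝ᵥ x) ≤ x ⬝ᵥ (M *ᵥ x)) : IsUnit M := by
  refine mulVec_injective_iff_isUnit.mp fun x y hxy => ?_
  have h := hM (x - y)
  rw [mulVec_sub, hxy, sub_self, dotProduct_zero] at h
  have hzero : (x - y) ⬝ᵥ (x - y) = 0 :=
    le_antisymm (nonpos_of_mul_nonpos_right h hσ) (dotProduct_self_nonneg _)
  exact sub_eq_zero.mp (dotProduct_self_eq_zero.mp hzero)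

theorem mulVec_mulVec_nonsing_inv [DecidableEq ι] {M : Matrix ι ι ℝ} (hM : IsUnit M)
    (z : ι → ℝ) : M *ᵥ (M⁻¹ *ᵥ z) = z := by
  rw [mulVec_mulVec, mul_nonsing_inv _ ((isUnit_iff_isUnit_det M).mp hM), one_mulVec]

theorem IsSymm.half_dotProduct_mulVec_sub_le {M : Matrix ι ι ℝ} (hM : M.IsSymm)
    (hpsd : ∀ x, 0 ≤ x ⬝ᵥ (M *ᵥ x)) (u v : ι → ℝ) :
    u ⬝ᵥ (M *ᵥ u) / 2 - v ⬝ᵥ (M *ᵥ v) / 2 ≤ u ⬝ᵥ (M *ᵥ u) - u ⬝ᵥ (M *ᵥ v) := by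
  have hvu : v ⬝ᵥ (M *ᵥ u) = u ⬝ᵥ (M *ᵥ v) := by
    rw [dotProduct_mulVec, ← mulVec_transpose, hM.eq, dotProduct_comm]
  have h := hpsd (u - v)
  simp only [mulVec_sub, dotProduct_sub, sub_dotProduct, hvu] at h
  linarith

end Matrix

theorem stmt8_general {n : ℕ} (M : Matrix (Fin n) (Fin n) ℝ) (hMsymm : M.IsSymm)
    (σ : ℝ) (hσ : 0 < σ)
    (hMlb : ∀ x : Fin n → ℝ, σ * (x ⬝ᵥ x) ≤ x ⬝ᵥ (M *ᵥ x))
    (D : Matrix (Fin n) (Fin n) ℝ)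
    (hDpsd : ∀ x : Fin n → ℝ, 0 ≤ x ⬝ᵥ (D *ᵥ x))
    (P : (Fin n → ℝ) → ℝ) (gradP : (Fin n → ℝ) → (Fin n → ℝ)) (L : ℝ) (hL : 0 < L)
    (hweak : ∀ x y : Fin n → ℝ,
      P y - P x - ((y - x) ⬝ᵥ gradP y) ≤ L / 2 * ((y - x) ⬝ᵥ (y - x)))
    (ε δ : ℝ) (hδ : 0 < δ)
    (θi θγ v r : Fin n → ℝ)
    (heq : δ⁻¹ • (θi - θγ) - v + M⁻¹ *ᵥ (D *ᵥ (θi - θγ))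
            + δ • (M⁻¹ *ᵥ gradP θi) = r)
    (hr : Real.sqrt ((M *ᵥ r) ⬝ᵥ (M *ᵥ r)) / δ ≤ ε) :
    ((1 : ℝ) / 2 * ((δ⁻¹ • (θi - θγ)) ⬝ᵥ (M *ᵥ (δ⁻¹ • (θi - θγ)))) + P θi) -
    ((1 : ℝ) / 2 * (v ⬝ᵥ (M *ᵥ v)) + P θγ) ≤
      (L * δ ^ 2 + δ) / (2 * σ) *
        ((δ⁻¹ • (θi - θγ)) ⬝ᵥ (M *ᵥ (δ⁻¹ • (θi - θγ)))) + δ * ε ^ 2 / 2 := by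
  set u := δ⁻¹ • (θi - θγ)
  have hΔ : θi - θγ = δ • u := by simp [u, smul_smul, hδ.ne']
  rw [hΔ] at heq
  have hstep : M *ᵥ u - M *ᵥ v + δ • (D *ᵥ u) + δ • gradP θi = M *ᵥ r := by
    simp only [← heq, mulVec_add, mulVec_sub, mulVec_smul,
      mulVec_mulVec_nonsing_inv (isUnit_of_coercive hσ hMlb)]
  have hbalance := congrArg (u ⬝ᵥ ·) hstep
  simp only [dotProduct_add, dotProduct_sub, dotProduct_smul, smul_eq_mul] at hbalance
  have hkin := hMsymm.half_dotProduct_mulVec_sub_le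
    (fun x => (mul_nonneg hσ.le (dotProduct_self_nonneg x)).trans (hMlb x)) u v
  have hpot := hweak θγ θi
  simp only [hΔ, smul_dotProduct, dotProduct_smul, smul_eq_mul] at hpot
  have hres : u ⬝ᵥ (M *ᵥ r) ≤ δ / 2 * (u ⬝ᵥ u) + δ * ε ^ 2 / 2 :=
    dotProduct_le_young_of_sqrt_le hδ.le (by rwa [mul_comm, ← div_le_iff₀ hδ])
  have hcoer : (L * δ ^ 2 + δ) / 2 * (u ⬝ᵥ u) ≤ (L * δ ^ 2 + δ) / (2 * σ) * (u ⬝ᵥ (M *ᵥ u)) :=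
    calc (L * δ ^ 2 + δ) / 2 * (u ⬝ᵥ u) = (L * δ ^ 2 + δ) / (2 * σ) * (σ * (u ⬝ᵥ u)) := by
          field_simp
      _ ≤ (L * δ ^ 2 + δ) / (2 * σ) * (u ⬝ᵥ (M *ᵥ u)) := by gcongr; exact hMlb u
  linarith [mul_nonneg hδ.le (hDpsd u)]

/-- One-step Hamiltonian bound in the presence of a positive semi-definite
damping matrix `D`. -/
theorem stmt8 {n : ℕ} (M : Matrix (Fin n) (Fin n) ℝ) (hMsymm : M.IsSymm)
    (σ : ℝ) (hσ : 0 < σ)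
    (hMlb : ∀ x : Fin n → ℝ, σ * (x ⬝ᵥ x) ≤ x ⬝ᵥ (M *ᵥ x))
    (D : Matrix (Fin n) (Fin n) ℝ) (hDsymm : D.IsSymm)
    (hDpsd : ∀ x : Fin n → ℝ, 0 ≤ x ⬝ᵥ (D *ᵥ x))
    (P : (Fin n → ℝ) → ℝ) (gradP : (Fin n → ℝ) → (Fin n → ℝ)) (L : ℝ) (hL : 0 < L)
    (hweak : ∀ x y : Fin n → ℝ,
      P y - P x - ((y - x) ⬝ᵥ gradP y) ≤ L / 2 * ((y - x) ⬝ᵥ (y - x)))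
    (ε δ : ℝ) (hε : 0 < ε) (hδ : 0 < δ)
    (θi θγ v r : Fin n → ℝ)
    (heq : δ⁻¹ • (θi - θγ) - v + M⁻¹ *ᵥ (D *ᵥ (θi - θγ))
            + δ • (M⁻¹ *ᵥ gradP θi) = r)
    (hr : Real.sqrt ((M *ᵥ r) ⬝ᵥ (M *ᵥ r)) / δ ≤ ε) :
    ((1 : ℝ) / 2 * ((δ⁻¹ • (θi - θγ)) ⬝ᵥ (M *ᵥ (δ⁻¹ • (θi - θγ)))) + P θi) -
    ((1 : ℝ) / 2 * (v ⬝ᵥ (M *ᵥ v)) + P θγ) ≤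
      (L * δ ^ 2 + δ) / (2 * σ) *
        ((δ⁻¹ • (θi - θγ)) ⬝ᵥ (M *ᵥ (δ⁻¹ • (θi - θγ)))) + δ * ε ^ 2 / 2 :=
  stmt8_general M hMsymm σ hσ hMlb D hDpsd P gradP L hL hweak ε δ hδ θi θγ v r heq hr
end

section
/- Let A, B ∈ ℝ^{3×3} with all singular values of A in [1−ε, 1+ε] and all singular values of B in [1−ε, 1+ε] (for 0 ≤ ε < 1), and suppose det(A) > 0 and det(B) < 0. Then ‖A − B‖_F ≥ 2 − 2ε. -/
open Matrix

/-!
The determinant changes sign along the segment from `A` to `B`, so it vanishes at some point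
`M` of that segment; a kernel vector `v ≠ 0` of `M` puts `0` on the segment from `A v` to `B v`,
whence `‖A v‖ + ‖B v‖ = ‖(A - B) v‖`. The left side is at least `2 (1 - ε) ‖v‖` because the
squared singular values are the eigenvalues of `Aᴴ A`, and the right side is at most
`‖A - B‖_F ‖v‖`.
-/

open WithLp

open scoped MatrixOrder in
theorem Matrix.IsHermitian.mul_dotProduct_self_le_dotProduct_mulVec {n : Type*} [Fintype n]
    [DecidableEq n] {M : Matrix n n ℝ} (hM : M.IsHermitian) {c : ℝ}
    (h : ∀ j, c ≤ hM.eigenvalues j) (v : n → ℝ) : c * (v ⬝ᵥ v) ≤ v ⬝ᵥ (M *ᵥ v) := by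
  have hle : algebraMap ℝ _ c ≤ M := by
    rw [algebraMap_le_iff_le_spectrum (a := M) hM, hM.spectrum_real_eq_range_eigenvalues]
    rintro _ ⟨j, rfl⟩
    exact h j
  simpa [Algebra.algebraMap_eq_smul_one, sub_mulVec, smul_mulVec, dotProduct_sub,
    sub_nonneg] using (le_iff.mp hle).dotProduct_mulVec_nonneg v

theorem Matrix.mul_norm_le_norm_mulVec {m n : Type*} [Fintype m] [Fintype n] [DecidableEq n]
    {A : Matrix m n ℝ} (hA : (Aᴴ * A).IsHermitian) {c : ℝ} (h : ∀ j, c ^ 2 ≤ hA.eigenvalues j)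
    (v : n → ℝ) : c * ‖toLp 2 v‖ ≤ ‖toLp 2 (A *ᵥ v)‖ := by
  have hsq : (c * ‖toLp 2 v‖) ^ 2 ≤ ‖toLp 2 (A *ᵥ v)‖ ^ 2 := by
    have := hA.mul_dotProduct_self_le_dotProduct_mulVec h v
    rw [← mulVec_mulVec, dotProduct_mulVec, conjTranspose_eq_transpose_of_trivial,
      vecMul_transpose] at this
    simpa [mul_pow, EuclideanSpace.real_norm_sq_eq, dotProduct, ← sq] using this
  exact (abs_le_of_sq_le_sq' hsq (norm_nonneg _)).2

section Frobenius

attribute [local instance] Matrix.frobeniusNormedAddCommGroup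

theorem Matrix.norm_mulVec_le_sqrt_sum_sq_mul_norm {m n : Type*} [Fintype m] [Fintype n]
    (M : Matrix m n ℝ) (v : n → ℝ) :
    ‖toLp 2 (M *ᵥ v)‖ ≤ √(∑ i, ∑ j, M i j ^ 2) * ‖toLp 2 v‖ := by
  have hM : ‖M‖ = √(∑ i, ∑ j, M i j ^ 2) := by simp [frobenius_norm_def, Real.sqrt_eq_rpow]
  simpa only [hM, ← frobenius_norm_replicateCol (ι := Unit), replicateCol_mulVec]
    using frobenius_norm_mul M (replicateCol Unit v)

end Frobenius

theorem Matrix.exists_det_eq_zero_mem_segment {n : Type*} [Fintype n] [DecidableEq n]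
    {A B : Matrix n n ℝ} (hA : 0 < A.det) (hB : B.det < 0) :
    ∃ M ∈ segment ℝ A B, M.det = 0 := by
  simpa using (convex_segment A B).isPreconnected.intermediate_value (right_mem_segment ℝ A B)
    (left_mem_segment ℝ A B) continuous_id.matrix_det.continuousOn ⟨hB.le, hA.le⟩

theorem Matrix.zero_mem_segment_mulVec {m n : Type*} [Fintype n] {A B M : Matrix m n ℝ}
    (hM : M ∈ segment ℝ A B) {v : n → ℝ} (hv : M *ᵥ v = 0) :
    (0 : EuclideanSpace ℝ m) ∈ segment ℝ (toLp 2 (A *ᵥ v)) (toLp 2 (B *ᵥ v)) := by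
  obtain ⟨a, b, ha, hb, hab, rfl⟩ := hM
  refine ⟨a, b, ha, hb, hab, ?_⟩
  rw [add_mulVec, smul_mulVec, smul_mulVec] at hv
  rw [← toLp_smul, ← toLp_smul, ← toLp_add, hv, toLp_zero]

theorem stmt12_general (A B : Matrix (Fin 3) (Fin 3) ℝ) (ε : ℝ)
    (hA : (Aᴴ * A).IsHermitian) (hB : (Bᴴ * B).IsHermitian)
    (hAsv : ∀ j, (1 - ε) ^ 2 ≤ hA.eigenvalues j ∧ hA.eigenvalues j ≤ (1 + ε) ^ 2)
    (hBsv : ∀ j, (1 - ε) ^ 2 ≤ hB.eigenvalues j ∧ hB.eigenvalues j ≤ (1 + ε) ^ 2)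
    (hdetA : 0 < A.det) (hdetB : B.det < 0) :
    2 - 2 * ε ≤ Real.sqrt (∑ i, ∑ j, (A i j - B i j) ^ 2) := by
  obtain ⟨M, hM, hMdet⟩ := exists_det_eq_zero_mem_segment hdetA hdetB
  obtain ⟨v, hv0, hMv⟩ := exists_mulVec_eq_zero_iff.mpr hMdet
  have hv : 0 < ‖toLp 2 v‖ := by simpa using hv0
  have hAv := mul_norm_le_norm_mulVec hA (fun j => (hAsv j).1) v
  have hBv := mul_norm_le_norm_mulVec hB (fun j => (hBsv j).1) v
  have hsplit : ‖toLp 2 (A *ᵥ v)‖ + ‖toLp 2 (B *ᵥ v)‖ = ‖toLp 2 ((A - B) *ᵥ v)‖ := by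
    simpa [dist_eq_norm, sub_mulVec] using
      dist_add_dist_of_mem_segment (zero_mem_segment_mulVec hM hMv)
  have hAB := norm_mulVec_le_sqrt_sum_sq_mul_norm (A - B) v
  simp only [Matrix.sub_apply] at hAB
  refine le_of_mul_le_mul_right ?_ hv
  linarith

/-- If all singular values of `A` and `B` lie in `[1−ε, 1+ε]` with `0 ≤ ε < 1`,
`det A > 0` and `det B < 0`, then `‖A − B‖_F ≥ 2 − 2ε`. -/
theorem stmt12 (A B : Matrix (Fin 3) (Fin 3) ℝ) (ε : ℝ) (hε0 : 0 ≤ ε) (hε1 : ε < 1)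
    (hA : (Aᴴ * A).IsHermitian) (hB : (Bᴴ * B).IsHermitian)
    (hAsv : ∀ j, (1 - ε) ^ 2 ≤ hA.eigenvalues j ∧ hA.eigenvalues j ≤ (1 + ε) ^ 2)
    (hBsv : ∀ j, (1 - ε) ^ 2 ≤ hB.eigenvalues j ∧ hB.eigenvalues j ≤ (1 + ε) ^ 2)
    (hdetA : 0 < A.det) (hdetB : B.det < 0) :
    2 - 2 * ε ≤ Real.sqrt (∑ i, ∑ j, (A i j - B i j) ^ 2) :=
  stmt12_general A B ε hA hB hAsv hBsv hdetA hdetB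
end
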